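/- arXiv:1701.09160 — 2 statements merged into one kernel-verified Lean document; each statement's English description precedes it below -/
import Mathlib

section
/- Stationarity of the split-normal likelihood in τ: let n ≥ 1 and s₁, s₂ > 0. The system of equations −n/σ + σ⁻³(s₁ + τ⁻²s₂) = 0 and −n/(1+τ) + s₂/(τ³σ²) = 0 in unknowns σ > 0, τ > 0 has the solution τ = (s₂/s₁)^{1/3} and σ² = (1/n)·s₁^{2/3}·(s₁^{1/3} + s₂^{1/3}). -/
/-!
Write `a = s₁^{1/3}` and `b = s₂^{1/3}`. Then `τ = b/a`, the formula for `σ²` reads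
`n σ² = a²(a + b)`, and after clearing denominators both first-order conditions reduce to
this single relation.
-/

open Real

lemma Real.rpow_one_third_pow_three {x : ℝ} (hx : 0 ≤ x) : (x ^ (1 / 3 : ℝ)) ^ 3 = x := by
  simpa [one_div] using rpow_inv_natCast_pow hx three_ne_zero

lemma Real.rpow_two_thirds {x : ℝ} (hx : 0 ≤ x) : x ^ (2 / 3 : ℝ) = (x ^ (1 / 3 : ℝ)) ^ 2 := by
  rw [← rpow_mul_natCast hx]
  norm_num

section CubeRoots

variable {n σ τ s₁ s₂ a b : ℝ}

lemma splitNormal_stationary_sigma (ha : a ≠ 0) (hσ : σ ≠ 0)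
    (hs₁ : a ^ 3 = s₁) (hs₂ : b ^ 3 = s₂) (hτ : τ = b / a)
    (h : n * σ ^ 2 = a ^ 2 * (a + b)) :
    -n / σ + σ⁻¹ ^ 3 * (s₁ + τ⁻¹ ^ 2 * s₂) = 0 := by
  subst hs₁ hs₂ hτ
  field_simp
  linear_combination -h

lemma splitNormal_stationary_tau (ha : 0 < a) (hb : 0 < b) (hσ : σ ≠ 0)
    (hs₂ : b ^ 3 = s₂) (hτ : τ = b / a)
    (h : n * σ ^ 2 = a ^ 2 * (a + b)) :
    -n / (1 + τ) + s₂ / (τ ^ 3 * σ ^ 2) = 0 := by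
  subst hs₂ hτ
  field_simp
  linear_combination -a * h

end CubeRoots

/-- Stationarity of the split-normal likelihood: `τ = (s₂/s₁)^{1/3}` and
`σ² = (1/n)·s₁^{2/3}·(s₁^{1/3} + s₂^{1/3})` solve the first-order conditions
`-n/σ + σ⁻³(s₁ + τ⁻²s₂) = 0` and `-n/(1+τ) + s₂/(τ³σ²) = 0`. -/
theorem splitNormal_stationarity (n : ℕ) (hn : 1 ≤ n) (s₁ s₂ : ℝ)
    (hs₁ : 0 < s₁) (hs₂ : 0 < s₂) (τ σ : ℝ)
    (hτ : τ = (s₂ / s₁) ^ ((1 : ℝ) / 3)) (hσpos : 0 < σ)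
    (hσ : σ ^ 2 = (1 / (n : ℝ)) * s₁ ^ ((2 : ℝ) / 3)
        * (s₁ ^ ((1 : ℝ) / 3) + s₂ ^ ((1 : ℝ) / 3))) :
    -(n : ℝ) / σ + σ⁻¹ ^ 3 * (s₁ + τ⁻¹ ^ 2 * s₂) = 0 ∧
    -(n : ℝ) / (1 + τ) + s₂ / (τ ^ 3 * σ ^ 2) = 0 := by
  have hn₀ : (n : ℝ) ≠ 0 := Nat.cast_ne_zero.mpr (Nat.one_le_iff_ne_zero.mp hn)
  have ha : 0 < s₁ ^ (1 / 3 : ℝ) := by positivity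
  have hb : 0 < s₂ ^ (1 / 3 : ℝ) := by positivity
  have hτ_eq : τ = s₂ ^ (1 / 3 : ℝ) / s₁ ^ (1 / 3 : ℝ) := by rw [hτ, div_rpow hs₂.le hs₁.le]
  have hnσ : (n : ℝ) * σ ^ 2 =
      (s₁ ^ (1 / 3 : ℝ)) ^ 2 * (s₁ ^ (1 / 3 : ℝ) + s₂ ^ (1 / 3 : ℝ)) := by
    rw [hσ, rpow_two_thirds hs₁.le]
    field_simp
  exact ⟨splitNormal_stationary_sigma ha.ne' hσpos.ne' (rpow_one_third_pow_three hs₁.le)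
      (rpow_one_third_pow_three hs₂.le) hτ_eq hnσ,
    splitNormal_stationary_tau ha hb hσpos.ne' (rpow_one_third_pow_three hs₂.le) hτ_eq hnσ⟩
end

section
/- Verification that the claimed MLE estimators satisfy the first-order conditions: with σ̂² = (1/n)·s₁^{2/3}·(s₁^{1/3} + s₂^{1/3}) and τ̂ = (s₂/s₁)^{1/3} (s₁, s₂ > 0, n ≥ 1), both equations −n/σ̂ + σ̂⁻³(s₁ + τ̂⁻²s₂) = 0 and −n/(1+τ̂) + s₂/(τ̂³·σ̂²) = 0 hold. -/
open Real

/-!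
With `a = s₁^{1/3}` and `b = s₂^{1/3}` one has `τ̂ = b / a`, `s₁ = a³`, `s₂ = b³` and
`n σ̂² = a²(a + b)`; eliminating `n` through the last relation turns both stationarity
equations into rational identities in `a`, `b`, `σ̂`.
-/

lemma Real.rpow_one_div_three_pow_three {x : ℝ} (hx : 0 ≤ x) :
    (x ^ ((1 : ℝ) / 3)) ^ 3 = x := by
  simpa using Real.rpow_inv_natCast_pow (n := 3) hx three_ne_zero

lemma Real.rpow_two_div_three {x : ℝ} (hx : 0 ≤ x) :
    x ^ ((2 : ℝ) / 3) = (x ^ ((1 : ℝ) / 3)) ^ 2 := by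
  rw [← Real.rpow_mul_natCast hx]
  norm_num

lemma Real.mul_sq_sqrt_one_div_mul {n x : ℝ} (hn : 0 < n) (hx : 0 ≤ x) :
    n * √(1 / n * x) ^ 2 = x := by
  rw [Real.sq_sqrt (by positivity)]
  field_simp

namespace SplitNormal

variable {n a b σ : ℝ} (ha : 0 < a) (hb : 0 < b) (hσ : n * σ ^ 2 = a ^ 2 * (a + b))
include ha hb hσ

lemma sigma_ne_zero : σ ≠ 0 := by
  rintro rfl
  have h : 0 < a ^ 2 * (a + b) := by positivity
  rw [← hσ] at h
  simp at h

lemma score_sigma_eq_zero :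
    -n / σ + σ⁻¹ ^ 3 * (a ^ 3 + (b / a)⁻¹ ^ 2 * b ^ 3) = 0 := by
  have hσ0 := sigma_ne_zero ha hb hσ
  have hsum : a ^ 3 + (b / a)⁻¹ ^ 2 * b ^ 3 = n * σ ^ 2 := by
    rw [hσ]
    field_simp
  rw [hsum]
  field_simp
  ring

lemma score_tau_eq_zero :
    -n / (1 + b / a) + b ^ 3 / ((b / a) ^ 3 * σ ^ 2) = 0 := by
  have hσ0 := sigma_ne_zero ha hb hσ
  have hn : n = a ^ 2 * (a + b) / σ ^ 2 := by
    field_simp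
    linarith
  rw [hn]
  field_simp
  ring

end SplitNormal

/-- Verification that the claimed MLE estimators satisfy the first-order conditions:
with `σ̂` the positive square root of `(1/n)·s₁^{2/3}·(s₁^{1/3}+s₂^{1/3})` and
`τ̂ = (s₂/s₁)^{1/3}`, both stationarity equations hold. -/
theorem splitNormal_mle_verification (n : ℕ) (hn : 1 ≤ n) (s₁ s₂ : ℝ)
    (hs₁ : 0 < s₁) (hs₂ : 0 < s₂) :
    let τ : ℝ := (s₂ / s₁) ^ ((1 : ℝ) / 3)
    let σ : ℝ := Real.sqrt ((1 / (n : ℝ)) * s₁ ^ ((2 : ℝ) / 3)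
        * (s₁ ^ ((1 : ℝ) / 3) + s₂ ^ ((1 : ℝ) / 3)))
    (-(n : ℝ) / σ + σ⁻¹ ^ 3 * (s₁ + τ⁻¹ ^ 2 * s₂) = 0) ∧
    (-(n : ℝ) / (1 + τ) + s₂ / (τ ^ 3 * σ ^ 2) = 0) := by
  intro τ σ
  set a := s₁ ^ ((1 : ℝ) / 3)
  set b := s₂ ^ ((1 : ℝ) / 3)
  have ha : 0 < a := by positivity
  have hb : 0 < b := by positivity
  have hτ : τ = b / a := Real.div_rpow hs₂.le hs₁.le _
  have hσ : (n : ℝ) * σ ^ 2 = a ^ 2 * (a + b) := by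
    show (n : ℝ) * √(1 / n * s₁ ^ ((2 : ℝ) / 3) * (a + b)) ^ 2 = _
    rw [mul_assoc, Real.rpow_two_div_three hs₁.le]
    exact Real.mul_sq_sqrt_one_div_mul (by exact_mod_cast hn) (by positivity)
  rw [hτ, ← Real.rpow_one_div_three_pow_three hs₁.le, ← Real.rpow_one_div_three_pow_three hs₂.le]
  exact ⟨SplitNormal.score_sigma_eq_zero ha hb hσ, SplitNormal.score_tau_eq_zero ha hb hσ⟩
end
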